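/- arXiv:1612.06328 — 3 statements merged into one kernel-verified Lean document; each statement's English description precedes it below -/
import Mathlib

section
/- Let s and k be positive integers with k ≤ s, and let m₁,…,m_k be integers whose sum is not divisible by s. Define T_{j₁,…,j_k} = ∏_{p=1}^{k} c_{m_p} e^{2πi m_p j_p / s} for fixed complex constants c_{m_p}. Then the sum of T_{j₁,…,j_k} over all k-tuples (j₁,…,j_k) of pairwise distinct elements of ℤ/sℤ equals 0. -/
/-!
Translating every coordinate by `1` permutes the injective tuples `j : Fin k → Fin s` and
multiplies each term by `ζ ^ (m₁ + ⋯ + mₖ)`, where `ζ = exp (2πi / s)`. Since `s ∤ m₁ + ⋯ + mₖ`,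
this factor is not `1`, whereas the sum is unchanged; hence the sum is `0`.
-/

open Complex Finset
open scoped Real

theorem Finset.sum_eq_zero_of_perm_eq_mul {α K : Type*} [Ring K] [NoZeroDivisors K]
    {S : Finset α} (e : α ≃ α) (he : ∀ x, x ∈ S ↔ e x ∈ S) {f : α → K} {w : K} (hw : w ≠ 1)
    (hf : ∀ x ∈ S, w * f x = f (e x)) : ∑ x ∈ S, f x = 0 := by
  have hfix : w * ∑ x ∈ S, f x = ∑ x ∈ S, f x := by
    rw [mul_sum]
    exact sum_equiv e he hf
  have : (w - 1) * ∑ x ∈ S, f x = 0 := by rw [sub_one_mul, hfix, sub_self]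
  exact (mul_eq_zero.mp this).resolve_left (sub_ne_zero.mpr hw)

theorem cexp_two_pi_I_mul_div_eq_one_iff {s : ℕ} (hs : s ≠ 0) (n : ℤ) :
    cexp (2 * π * I * n / s) = 1 ↔ (s : ℤ) ∣ n := by
  rw [exp_eq_one_iff]
  constructor
  · rintro ⟨q, hq⟩
    refine ⟨q, ?_⟩
    field_simp at hq
    exact_mod_cast hq
  · rintro ⟨q, rfl⟩
    exact ⟨q, by field_simp; push_cast; ring⟩

theorem cexp_two_pi_I_mul_natCast_mod_div (s : ℕ) (m : ℤ) (a : ℕ) :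
    cexp (2 * π * I * m * ((a % s : ℕ) : ℂ) / s) = cexp (2 * π * I * m * (a : ℂ) / s) := by
  rcases eq_or_ne s 0 with rfl | hs
  · simp
  rw [exp_eq_exp_iff_exists_int]
  obtain ⟨q, hq⟩ : ∃ q : ℕ, a % s + s * q = a := ⟨_, Nat.mod_add_div a s⟩
  refine ⟨-(m * q), ?_⟩
  have hdiv : ((a % s : ℕ) : ℂ) + s * q = a := by exact_mod_cast hq
  field_simp
  push_cast
  linear_combination (m : ℂ) * hdiv

theorem cexp_two_pi_I_mul_fin_add_div {s : ℕ} (m : ℤ) (a b : Fin s) :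
    cexp (2 * π * I * m * (((a + b : Fin s) : ℕ) : ℂ) / s) =
      cexp (2 * π * I * m * ((b : ℕ) : ℂ) / s) * cexp (2 * π * I * m * ((a : ℕ) : ℂ) / s) := by
  rw [Fin.val_add, cexp_two_pi_I_mul_natCast_mod_div, ← exp_add]
  congr 1
  push_cast
  ring

theorem prod_mul_cexp_translate {k s : ℕ} (m : Fin k → ℤ) (c : Fin k → ℂ)
    (j : Fin k → Fin s) (t : Fin s) :
    cexp (2 * π * I * ((∑ p, m p : ℤ) : ℂ) * ((t : ℕ) : ℂ) / s) *
        ∏ p, c p * cexp (2 * π * I * m p * ((j p : ℕ) : ℂ) / s) =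
      ∏ p, c p * cexp (2 * π * I * m p * (((j p + t : Fin s) : ℕ) : ℂ) / s) := by
  have hsum : 2 * π * I * ((∑ p, m p : ℤ) : ℂ) * ((t : ℕ) : ℂ) / s =
      ∑ p, 2 * π * I * m p * ((t : ℕ) : ℂ) / s := by
    push_cast
    rw [mul_sum, sum_mul, sum_div]
  rw [hsum, Complex.exp_sum, ← prod_mul_distrib]
  exact prod_congr rfl fun p _ => by rw [cexp_two_pi_I_mul_fin_add_div]; ring

open scoped Classical in
theorem stmt1 (s k : ℕ) (hk1 : 1 ≤ k) (hks : k ≤ s)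
    (m : Fin k → ℤ) (c : Fin k → ℂ)
    (hm : ¬ ((s : ℤ) ∣ ∑ p, m p)) :
    ∑ j ∈ Finset.univ.filter (fun j : Fin k → Fin s => Function.Injective j),
      ∏ p, c p * Complex.exp (2 * Real.pi * Complex.I * m p * ((j p : ℕ) : ℂ) / s) = 0 := by
  have hs : s ≠ 0 := by omega
  have : NeZero s := ⟨hs⟩
  refine sum_eq_zero_of_perm_eq_mul (Equiv.addRight fun _ => 1) (fun j => ?_) ?_
    fun j _ => prod_mul_cexp_translate m c j 1
  · simp only [mem_filter, mem_univ, true_and, Equiv.coe_addRight]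
    exact ((add_left_injective 1).of_comp_iff j).symm
  · rw [Fin.val_one', cexp_two_pi_I_mul_natCast_mod_div, Nat.cast_one, mul_one,
      Ne, cexp_two_pi_I_mul_div_eq_one_iff hs]
    exact hm
end

section
/- Let s be a positive integer, and for each j = 0,…,s-1 let X_j, Y_j : [0,2π] → ℝ be functions of the form X_j(t) = F((t+2πj)/s), Y_j(t) = G((t+2πj)/s) where F and G are real trigonometric polynomials of period 2π. Then for any a, b > 0 the function g(u,t) = ∏_{j=0}^{s-1}(u - aX_j(t) - i bY_j(t)) can be written as a finite Laurent polynomial in e^{it} with coefficients that are polynomials in u; that is, there exist complex coefficients d_{p,q} (finitely many nonzero, q ∈ ℤ) with g(u,t) = ∑_{p,q} d_{p,q} u^p e^{iqt} for all u ∈ ℂ and t ∈ [0,2π]. -/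
/-!
Put `z = exp (i t / s)`. Each factor `u - A F((t + 2πj)/s) - i B G((t + 2πj)/s)` is a polynomial
in `u` and a Laurent polynomial in `z`, hence so is the product `g`. Since `F` and `G` are
`2π`-periodic, replacing `t` by `t + 2π` permutes the factors cyclically, so `g` is `2π`-periodic
in `t`. Averaging `g` over `t, t + 2π, …, t + 2π(s - 1)` multiplies the coefficient of `z ^ q` by
`s⁻¹ ∑_{r < s} ζ ^ (q r)` with `ζ = exp (2πi / s)`, which is `1` if `s ∣ q` and `0` otherwise; only
the powers `z ^ (s m) = exp (i m t)` survive.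
-/

open Complex Finset Function

noncomputable section

/-- The exponent `(p, q)` stands for `u ^ p * exp (i q t / T)`. -/
def laurentMonomial (T : ℝ) : Multiplicative (ℕ × ℤ) →* (ℂ → ℝ → ℂ) where
  toFun pq u t := u ^ pq.toAdd.1 * exp (I * pq.toAdd.2 * (t / T))
  map_one' := by ext; simp
  map_mul' x y := by
    ext u t
    simp only [toAdd_mul, Prod.fst_add, Prod.snd_add, Int.cast_add, Pi.mul_apply, pow_add,
      add_mul, mul_add, exp_add]
    ring

def laurentEval (T : ℝ) : AddMonoidAlgebra ℂ (ℕ × ℤ) →ₐ[ℂ] ℂ → ℝ → ℂ :=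
  AddMonoidAlgebra.lift ℂ (ℂ → ℝ → ℂ) (ℕ × ℤ) (laurentMonomial T)

theorem laurentEval_apply (T : ℝ) (x : AddMonoidAlgebra ℂ (ℕ × ℤ)) (u : ℂ) (t : ℝ) :
    laurentEval T x u t =
      ∑ pq ∈ x.coeff.support, x.coeff pq * u ^ pq.1 * exp (I * pq.2 * (t / T)) := by
  simp [laurentEval, AddMonoidAlgebra.lift_apply, Finsupp.sum, laurentMonomial, mul_assoc]

theorem laurentEval_single (T : ℝ) (pq : ℕ × ℤ) (c : ℂ) :
    laurentEval T (.single pq c) = fun u (t : ℝ) => c * u ^ pq.1 * exp (I * pq.2 * (t / T)) := by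
  ext u t
  simp [laurentEval, AddMonoidAlgebra.lift_single, laurentMonomial, mul_assoc]

theorem laurentEval_mapDomain_mul_snd {s : ℕ} (hs : s ≠ 0) (y : AddMonoidAlgebra ℂ (ℕ × ℤ)) :
    laurentEval s (y.mapDomain fun pq => (pq.1, s * pq.2)) = laurentEval 1 y := by
  induction y using AddMonoidAlgebra.induction_linear with
  | zero => simp
  | add y z hy hz => rw [AddMonoidAlgebra.mapDomain_add, map_add, map_add, hy, hz]
  | single pq c =>
    rw [AddMonoidAlgebra.mapDomain_single, laurentEval_single, laurentEval_single]
    ext u t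
    have : (s : ℂ) ≠ 0 := Nat.cast_ne_zero.2 hs
    push_cast
    field_simp

theorem mem_range_laurentEval_id (T : ℝ) : (fun u (_ : ℝ) => u) ∈ (laurentEval T).range :=
  ⟨.single (1, 0) 1, by simp [laurentEval_single]⟩

theorem mem_range_laurentEval_of_eq_sum_exp {S : Finset ℤ} {a : ℤ → ℂ} {f : ℝ → ℂ}
    (hf : ∀ t : ℝ, f t = ∑ k ∈ S, a k * exp (I * k * t)) (T c : ℝ) :
    (fun _ (t : ℝ) => f ((t + c) / T)) ∈ (laurentEval T).range := by
  refine ⟨∑ k ∈ S, .single (0, k) (a k * exp (I * k * (c / T))), ?_⟩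
  ext u t
  rw [map_sum, AlgHom.toRingHom_eq_coe, RingHom.coe_coe, Finset.sum_apply, Finset.sum_apply, hf]
  refine Finset.sum_congr rfl fun k _ => ?_
  simp only [laurentEval_single, pow_zero, mul_one, mul_assoc, ← exp_add]
  push_cast
  ring_nf

theorem periodic_of_eq_sum_exp {S : Finset ℤ} {a : ℤ → ℂ} {f : ℝ → ℂ}
    (hf : ∀ t : ℝ, f t = ∑ k ∈ S, a k * exp (I * k * t)) : Periodic f (2 * Real.pi) := by
  intro t
  simp only [hf]
  refine Finset.sum_congr rfl fun k _ => ?_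
  have : I * k * ((t + 2 * Real.pi : ℝ) : ℂ) = I * k * t + k * (2 * Real.pi * I) := by
    push_cast; ring
  rw [this, exp_add, exp_int_mul_two_pi_mul_I, mul_one]

theorem Function.Periodic.prod_range_div {M : Type*} [CommMonoid M] {h : ℝ → M} {c : ℝ}
    (hh : Periodic h c) {s : ℕ} (hs : s ≠ 0) :
    Periodic (fun t => ∏ j ∈ range s, h ((t + c * j) / s)) c := by
  intro t
  obtain ⟨n, rfl⟩ := Nat.exists_eq_succ_of_ne_zero hs
  simp only
  rw [prod_range_succ, prod_range_succ']
  have hlast : (t + c + c * n) / (n.succ : ℝ) = (t + c * (0 : ℕ)) / n.succ + c := by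
    push_cast; field_simp; ring
  rw [hlast, hh]
  congr 1
  refine prod_congr rfl fun j _ => ?_
  push_cast
  ring_nf

theorem IsPrimitiveRoot.sum_range_zpow_pow {K : Type*} [Field K] {ζ : K} {s : ℕ}
    (hζ : IsPrimitiveRoot ζ s) (q : ℤ) :
    ∑ r ∈ range s, (ζ ^ q) ^ r = if (s : ℤ) ∣ q then (s : K) else 0 := by
  split_ifs with h
  · simp [(hζ.zpow_eq_one_iff_dvd q).2 h]
  · have hpow : (ζ ^ q) ^ s = 1 := by
      rw [← zpow_natCast, ← zpow_mul, mul_comm, zpow_mul, zpow_natCast, hζ.pow_eq_one, one_zpow]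
    rw [geom_sum_eq ((hζ.zpow_eq_one_iff_dvd q).not.2 h), hpow, sub_self, zero_div]

theorem laurentEval_eq_filter_of_periodic {s : ℕ} (hs : s ≠ 0) (x : AddMonoidAlgebra ℂ (ℕ × ℤ))
    (hper : ∀ u, Periodic (laurentEval s x u) (2 * Real.pi)) :
    laurentEval s x = laurentEval s (.ofCoeff (x.coeff.filter fun pq => (s : ℤ) ∣ pq.2)) := by
  ext u t
  have hζ := isPrimitiveRoot_exp s hs
  set ζ := exp (2 * Real.pi * I / s)
  have hshift : ∀ (q : ℤ) (r : ℕ),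
      exp (I * q * (((t + r * (2 * Real.pi) : ℝ) : ℂ) / ((s : ℝ) : ℂ))) =
        exp (I * q * (t / ((s : ℝ) : ℂ))) * (ζ ^ q) ^ r := by
    intro q r
    rw [← exp_int_mul, ← exp_nat_mul, ← exp_add]
    push_cast
    ring_nf
  apply mul_left_cancel₀ (Nat.cast_ne_zero.2 hs : (s : ℂ) ≠ 0)
  calc (s : ℂ) * laurentEval s x u t
      = ∑ r ∈ range s, laurentEval s x u (t + r * (2 * Real.pi)) := by
        simp [fun r : ℕ => (hper u).nat_mul r t]
    _ = ∑ pq ∈ x.coeff.support, x.coeff pq * u ^ pq.1 * exp (I * pq.2 * (t / s)) *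
          ∑ r ∈ range s, (ζ ^ pq.2) ^ r := by
        simp only [laurentEval_apply, hshift, mul_sum]
        rw [sum_comm]
        simp only [mul_assoc, ofReal_natCast]
    _ = _ := by
        simp only [hζ.sum_range_zpow_pow, laurentEval_apply, Finsupp.support_filter, sum_filter,
          mul_sum]
        refine sum_congr rfl fun pq _ => ?_
        split_ifs with h
        · rw [Finsupp.filter_apply_pos (fun pq : ℕ × ℤ => (s : ℤ) ∣ pq.2) x.coeff h]
          push_cast
          ring
        · ring

theorem mem_range_laurentEval_one_of_periodic {s : ℕ} (hs : s ≠ 0) {f : ℂ → ℝ → ℂ}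
    (hf : f ∈ (laurentEval s).range) (hper : ∀ u, Periodic (f u) (2 * Real.pi)) :
    f ∈ (laurentEval 1).range := by
  obtain ⟨x, rfl⟩ := (AlgHom.mem_range _).1 hf
  set φ : ℕ × ℤ → ℕ × ℤ := fun pq => (pq.1, s * pq.2)
  have hφ : Injective φ := fun pq pq' h => by
    simp only [φ, Prod.mk.injEq] at h
    exact Prod.ext h.1 (mul_left_cancel₀ (by exact_mod_cast hs) h.2)
  set y : AddMonoidAlgebra ℂ (ℕ × ℤ) := .ofCoeff (x.coeff.filter fun pq => (s : ℤ) ∣ pq.2)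
  have hy : ↑y.coeff.support ⊆ Set.range φ := by
    rintro ⟨p, q⟩ hpq
    simp only [y, Finset.mem_coe, Finsupp.support_filter, Finset.mem_filter] at hpq
    obtain ⟨m, rfl⟩ := hpq.2
    exact ⟨(p, m), rfl⟩
  refine (AlgHom.mem_range _).2 ⟨y.comapDomain φ hφ, ?_⟩
  rw [← laurentEval_mapDomain_mul_snd hs, AddMonoidAlgebra.mapDomain_comapDomain hy,
    laurentEval_eq_filter_of_periodic hs x hper]

end

theorem stmt2_general (s : ℕ) (hs : 0 < s) (N M : ℕ) (a b : ℤ → ℂ)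
    (F G : ℝ → ℝ)
    (hF : ∀ t : ℝ, (F t : ℂ) =
      ∑ k ∈ Finset.Icc (-(N : ℤ)) (N : ℤ), a k * Complex.exp (Complex.I * k * t))
    (hG : ∀ t : ℝ, (G t : ℂ) =
      ∑ k ∈ Finset.Icc (-(M : ℤ)) (M : ℤ), b k * Complex.exp (Complex.I * k * t))
    (A B : ℝ) :
    ∃ (P : Finset (ℕ × ℤ)) (d : ℕ × ℤ → ℂ),
      ∀ (u : ℂ) (t : ℝ), t ∈ Set.Icc (0 : ℝ) (2 * Real.pi) →
        ∏ j ∈ Finset.range s,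
          (u - (A : ℂ) * F ((t + 2 * Real.pi * j) / s)
             - Complex.I * (B : ℂ) * G ((t + 2 * Real.pi * j) / s))
        = ∑ pq ∈ P, d pq * u ^ pq.1 * Complex.exp (Complex.I * pq.2 * t) := by
  set factor : ℂ → ℝ → ℂ := fun u x => u - A * F x - I * B * G x
  have hfactor : ∀ j : ℕ, (fun u t => factor u ((t + 2 * Real.pi * j) / s)) ∈
      (laurentEval s).range := fun j =>
    sub_mem (sub_mem (mem_range_laurentEval_id _)
      (mul_mem (algebraMap_mem _ (A : ℂ)) (mem_range_laurentEval_of_eq_sum_exp hF _ _)))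
      (mul_mem (algebraMap_mem _ (I * B)) (mem_range_laurentEval_of_eq_sum_exp hG _ _))
  have hper : ∀ u, Periodic (factor u) (2 * Real.pi) := fun u x => by
    simp only [factor, periodic_of_eq_sum_exp hF x, periodic_of_eq_sum_exp hG x]
  obtain ⟨y, hy⟩ := (AlgHom.mem_range _).1 <| mem_range_laurentEval_one_of_periodic hs.ne'
    (Subalgebra.prod_mem _ (t := range s) fun j _ => hfactor j) fun u => by
      simpa only [Finset.prod_apply, Finset.prod_fn] using (hper u).prod_range_div hs.ne'
  refine ⟨y.coeff.support, y.coeff, fun u t _ => ?_⟩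
  simpa [laurentEval_apply, Finset.prod_apply] using (congrFun (congrFun hy u) t).symm

theorem stmt2 (s : ℕ) (hs : 0 < s) (N M : ℕ) (a b : ℤ → ℂ)
    (ha : ∀ k, a (-k) = starRingEnd ℂ (a k)) (hb : ∀ k, b (-k) = starRingEnd ℂ (b k))
    (F G : ℝ → ℝ)
    (hF : ∀ t : ℝ, (F t : ℂ) =
      ∑ k ∈ Finset.Icc (-(N : ℤ)) (N : ℤ), a k * Complex.exp (Complex.I * k * t))
    (hG : ∀ t : ℝ, (G t : ℂ) =
      ∑ k ∈ Finset.Icc (-(M : ℤ)) (M : ℤ), b k * Complex.exp (Complex.I * k * t))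
    (A B : ℝ) (hA : 0 < A) (hB : 0 < B) :
    ∃ (P : Finset (ℕ × ℤ)) (d : ℕ × ℤ → ℂ),
      ∀ (u : ℂ) (t : ℝ), t ∈ Set.Icc (0 : ℝ) (2 * Real.pi) →
        ∏ j ∈ Finset.range s,
          (u - (A : ℂ) * F ((t + 2 * Real.pi * j) / s)
             - Complex.I * (B : ℂ) * G ((t + 2 * Real.pi * j) / s))
        = ∑ pq ∈ P, d pq * u ^ pq.1 * Complex.exp (Complex.I * pq.2 * t) :=
  stmt2_general s hs N M a b F G hF hG A B
end

section
/- Let f : ℂ² → ℂ be a polynomial in u, v, conj(v), and apply the substitution u = (x²+y²+z²-1+2iz)/(x²+y²+z²+1), v = 2(x+iy)/(x²+y²+z²+1) (inverse stereographic projection). Then (x²+y²+z²+1)^{deg f} · f(u(x,y,z), v(x,y,z)) is a polynomial in x, y, z with complex coefficients, of degree at most 2·deg f, and its real zero set in ℝ³ equals the preimage under stereographic projection of f⁻¹(0) ∩ S³ (minus the point at infinity). -/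
/-!
Substituting `u = A / D`, `v = B / D`, `conj v = B' / D` into a polynomial of degree `≤ d`,
with `A, B, B', D` quadratic polynomials in `x, y, z`, and multiplying by `D ^ d` gives a
polynomial of degree `≤ 2 d`. Since `D = x² + y² + z² + 1` never vanishes on `ℝ³`, this
polynomial has the same real zeros as `f ∘ (u, v)`.
-/

/-- First coordinate of inverse stereographic projection, landing in S³ ⊂ ℂ². -/
noncomputable def uStereo (x y z : ℝ) : ℂ :=
  ((x : ℂ) ^ 2 + (y : ℂ) ^ 2 + (z : ℂ) ^ 2 - 1 + 2 * Complex.I * (z : ℂ)) /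
    ((x : ℂ) ^ 2 + (y : ℂ) ^ 2 + (z : ℂ) ^ 2 + 1)

/-- Second coordinate of inverse stereographic projection. -/
noncomputable def vStereo (x y z : ℝ) : ℂ :=
  2 * ((x : ℂ) + Complex.I * (y : ℂ)) /
    ((x : ℂ) ^ 2 + (y : ℂ) ^ 2 + (z : ℂ) ^ 2 + 1)

open MvPolynomial Complex

namespace MvPolynomial

variable {σ R : Type*} [CommSemiring R]

theorem totalDegree_mul_le_of_le {P Q : MvPolynomial σ R} {m n : ℕ}
    (hP : P.totalDegree ≤ m) (hQ : Q.totalDegree ≤ n) : (P * Q).totalDegree ≤ m + n :=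
  (totalDegree_mul P Q).trans (add_le_add hP hQ)

theorem totalDegree_pow_le_of_le {P : MvPolynomial σ R} {k : ℕ} (hP : P.totalDegree ≤ k)
    (n : ℕ) : (P ^ n).totalDegree ≤ n * k :=
  (totalDegree_pow P n).trans (Nat.mul_le_mul_left n hP)

/-- `D ^ d * ∑ c t (A / D) ^ t₁ (B / D) ^ t₂ (B' / D) ^ t₃` with the denominators cleared.
It is only meaningful when every `t ∈ S` has `t₁ + t₂ + t₃ ≤ d`, as the exponent of `D`
is a truncated subtraction. -/
noncomputable def clearDenominators (S : Finset (ℕ × ℕ × ℕ)) (c : ℕ × ℕ × ℕ → R) (d : ℕ)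
    (A B B' D : MvPolynomial σ R) : MvPolynomial σ R :=
  ∑ t ∈ S, C (c t) * A ^ t.1 * B ^ t.2.1 * B' ^ t.2.2 * D ^ (d - (t.1 + t.2.1 + t.2.2))

variable {S : Finset (ℕ × ℕ × ℕ)} {d : ℕ}

theorem totalDegree_clearDenominators_le (c : ℕ × ℕ × ℕ → R) {A B B' D : MvPolynomial σ R}
    {k : ℕ} (hd : ∀ t ∈ S, t.1 + t.2.1 + t.2.2 ≤ d) (hA : A.totalDegree ≤ k)
    (hB : B.totalDegree ≤ k) (hB' : B'.totalDegree ≤ k) (hD : D.totalDegree ≤ k) :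
    (clearDenominators S c d A B B' D).totalDegree ≤ k * d := by
  refine totalDegree_finsetSum_le fun t ht => ?_
  calc _ ≤ (C (c t) : MvPolynomial σ R).totalDegree + t.1 * k + t.2.1 * k + t.2.2 * k
          + (d - (t.1 + t.2.1 + t.2.2)) * k := by
        apply_rules [totalDegree_mul_le_of_le, totalDegree_pow_le_of_le, le_refl]
    _ = k * d := by
        rw [totalDegree_C, zero_add, ← add_mul, ← add_mul, ← add_mul,
          Nat.add_sub_cancel' (hd t ht), mul_comm]

theorem eval_clearDenominators {K : Type*} [Field K] (c : ℕ × ℕ × ℕ → K)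
    {A B B' D : MvPolynomial σ K} (x : σ → K) (hd : ∀ t ∈ S, t.1 + t.2.1 + t.2.2 ≤ d)
    (hD : eval x D ≠ 0) :
    eval x (clearDenominators S c d A B B' D) = eval x D ^ d *
      ∑ t ∈ S, c t * (eval x A / eval x D) ^ t.1 * (eval x B / eval x D) ^ t.2.1 *
        (eval x B' / eval x D) ^ t.2.2 := by
  simp only [clearDenominators, map_sum, map_mul, map_pow, eval_C, Finset.mul_sum]
  refine Finset.sum_congr rfl fun t ht => ?_
  have hsplit : eval x D ^ d = eval x D ^ t.1 * eval x D ^ t.2.1 * eval x D ^ t.2.2 *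
      eval x D ^ (d - (t.1 + t.2.1 + t.2.2)) := by
    rw [← pow_add, ← pow_add, ← pow_add, Nat.add_sub_cancel' (hd t ht)]
  rw [hsplit, div_pow, div_pow, div_pow]
  field_simp

end MvPolynomial

noncomputable def stereoDenom : MvPolynomial (Fin 3) ℂ := X 0 ^ 2 + X 1 ^ 2 + X 2 ^ 2 + 1

noncomputable def uStereoNum : MvPolynomial (Fin 3) ℂ :=
  X 0 ^ 2 + X 1 ^ 2 + X 2 ^ 2 - 1 + (2 * I) • X 2

noncomputable def vStereoNum : MvPolynomial (Fin 3) ℂ := (2 : ℂ) • (X 0 + I • X 1)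

noncomputable def vStereoConjNum : MvPolynomial (Fin 3) ℂ := (2 : ℂ) • (X 0 - I • X 1)

theorem totalDegree_stereoDenom_le : stereoDenom.totalDegree ≤ 2 := by
  rw [← mem_restrictTotalDegree, stereoDenom]
  apply_rules [add_mem] <;> simp [mem_restrictTotalDegree, totalDegree_X_pow]

theorem totalDegree_uStereoNum_le : uStereoNum.totalDegree ≤ 2 := by
  rw [← mem_restrictTotalDegree, uStereoNum]
  apply_rules [add_mem, sub_mem, Submodule.smul_mem] <;>
    simp [mem_restrictTotalDegree, totalDegree_X_pow, totalDegree_X]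

theorem totalDegree_vStereoNum_le : vStereoNum.totalDegree ≤ 2 := by
  rw [← mem_restrictTotalDegree, vStereoNum]
  apply_rules [add_mem, Submodule.smul_mem] <;> simp [mem_restrictTotalDegree, totalDegree_X]

theorem totalDegree_vStereoConjNum_le : vStereoConjNum.totalDegree ≤ 2 := by
  rw [← mem_restrictTotalDegree, vStereoConjNum]
  apply_rules [sub_mem, Submodule.smul_mem] <;> simp [mem_restrictTotalDegree, totalDegree_X]

section Evaluation

variable (x y z : ℝ)

theorem eval_stereoDenom :
    eval ![(x : ℂ), y, z] stereoDenom = (x : ℂ) ^ 2 + (y : ℂ) ^ 2 + (z : ℂ) ^ 2 + 1 := by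
  simp [stereoDenom]

theorem eval_stereoDenom_ne_zero : eval ![(x : ℂ), y, z] stereoDenom ≠ 0 := by
  rw [eval_stereoDenom]
  exact_mod_cast (by positivity : x ^ 2 + y ^ 2 + z ^ 2 + 1 ≠ 0)

theorem eval_uStereoNum_div :
    eval ![(x : ℂ), y, z] uStereoNum / eval ![(x : ℂ), y, z] stereoDenom = uStereo x y z := by
  simp [uStereoNum, stereoDenom, uStereo]

theorem eval_vStereoNum_div :
    eval ![(x : ℂ), y, z] vStereoNum / eval ![(x : ℂ), y, z] stereoDenom = vStereo x y z := by
  simp [vStereoNum, stereoDenom, vStereo, mul_add]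

theorem eval_vStereoConjNum_div :
    eval ![(x : ℂ), y, z] vStereoConjNum / eval ![(x : ℂ), y, z] stereoDenom =
      starRingEnd ℂ (vStereo x y z) := by
  simp [vStereoConjNum, stereoDenom, vStereo, map_ofNat]
  ring

theorem norm_uStereo_sq_add_norm_vStereo_sq :
    ‖uStereo x y z‖ ^ 2 + ‖vStereo x y z‖ ^ 2 = 1 := by
  have hD : x ^ 2 + y ^ 2 + z ^ 2 + 1 ≠ 0 := by positivity
  have hu : uStereo x y z =
      ((x ^ 2 + y ^ 2 + z ^ 2 - 1 : ℝ) + (2 * z : ℝ) * I) / (x ^ 2 + y ^ 2 + z ^ 2 + 1 : ℝ) := by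
    rw [uStereo]; push_cast; ring
  have hv : vStereo x y z = ((2 * x : ℝ) + (2 * y : ℝ) * I) / (x ^ 2 + y ^ 2 + z ^ 2 + 1 : ℝ) := by
    rw [vStereo]; push_cast; ring
  rw [Complex.sq_norm, Complex.sq_norm, hu, hv, normSq_div, normSq_div, normSq_add_mul_I,
    normSq_add_mul_I, normSq_ofReal]
  field_simp
  ring

end Evaluation

theorem stmt18 (S : Finset (ℕ × ℕ × ℕ)) (c : ℕ × ℕ × ℕ → ℂ) (f : ℂ → ℂ → ℂ)
    (hf : ∀ u v : ℂ, f u v =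
      ∑ x ∈ S, c x * u ^ x.1 * v ^ x.2.1 * (starRingEnd ℂ v) ^ x.2.2) :
    ∃ Q : MvPolynomial (Fin 3) ℂ,
      Q.totalDegree ≤ 2 * (S.sup fun x => x.1 + x.2.1 + x.2.2) ∧
      ∀ x y z : ℝ,
        (MvPolynomial.eval ![(x : ℂ), (y : ℂ), (z : ℂ)] Q
          = ((x : ℂ) ^ 2 + (y : ℂ) ^ 2 + (z : ℂ) ^ 2 + 1)
              ^ (S.sup fun x => x.1 + x.2.1 + x.2.2)
            * f (uStereo x y z) (vStereo x y z)) ∧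
        (‖uStereo x y z‖ ^ 2 + ‖vStereo x y z‖ ^ 2 = 1) ∧
        (MvPolynomial.eval ![(x : ℂ), (y : ℂ), (z : ℂ)] Q = 0 ↔
          f (uStereo x y z) (vStereo x y z) = 0) := by
  set d := S.sup fun x => x.1 + x.2.1 + x.2.2
  have hd : ∀ t ∈ S, t.1 + t.2.1 + t.2.2 ≤ d := fun t ht =>
    Finset.le_sup (f := fun x => x.1 + x.2.1 + x.2.2) ht
  refine ⟨clearDenominators S c d uStereoNum vStereoNum vStereoConjNum stereoDenom,
    totalDegree_clearDenominators_le c hd totalDegree_uStereoNum_le totalDegree_vStereoNum_le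
      totalDegree_vStereoConjNum_le totalDegree_stereoDenom_le, fun x y z => ?_⟩
  have hD := eval_stereoDenom_ne_zero x y z
  have hQ : eval ![(x : ℂ), y, z]
      (clearDenominators S c d uStereoNum vStereoNum vStereoConjNum stereoDenom) =
      ((x : ℂ) ^ 2 + (y : ℂ) ^ 2 + (z : ℂ) ^ 2 + 1) ^ d * f (uStereo x y z) (vStereo x y z) := by
    rw [eval_clearDenominators c _ hd hD, eval_uStereoNum_div,
      eval_vStereoNum_div, eval_vStereoConjNum_div, eval_stereoDenom, hf]
  refine ⟨hQ, norm_uStereo_sq_add_norm_vStereo_sq x y z, ?_⟩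
  rw [hQ, mul_eq_zero, or_iff_right (pow_ne_zero d (eval_stereoDenom x y z ▸ hD))]
end
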